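/- Let ψ ∈ S_0(ℝ²), f ∈ L¹(ℝ²)∩L²(ℝ²), and F ∈ 𝒮(𝕊). Then ∫_{ℝ²} f(x) 𝒮^t_{conj(ψ)}F(x) dx = ∫_{ℝ^×}∫_ℝ∫_{ℝ²} 𝒮_ψ f(b,s,a) F(b,s,a) db ds da/|a|³ (duality between the shearlet transform and the shearlet synthesis operator). -/

import Mathlib

open MeasureTheory Complex SchwartzMap
open scoped FourierTransform RealInnerProductSpace

noncomputable section

abbrev E2 := EuclideanSpace ℝ (Fin 2)

/-- construct a point of ℝ² -/
def e2 (u v : ℝ) : E2 := (WithLp.equiv 2 (Fin 2 → ℝ)).symm ![u, v]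

/-- Japanese bracket ⟨x⟩ = (1+‖x‖²)^{1/2}. -/
def jp {E : Type*} [NormedAddCommGroup E] (x : E) : ℝ := Real.sqrt (1 + ‖x‖^2)

/-- Schwartz seminorms ρ_ν. -/
def rho {E : Type*} [NormedAddCommGroup E] [NormedSpace ℝ E] (ν : ℕ) (f : E → ℂ) : ℝ :=
  ⨆ p : E × Fin (ν + 1), jp p.1 ^ ν * ‖iteratedFDeriv ℝ p.2 f p.1‖

/-- Lizorkin membership on ℝ²: Schwartz with all vanishing moments. -/
def IsLizorkin2 (f : E2 → ℂ) : Prop :=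
  (∃ g : SchwartzMap E2 ℂ, ⇑g = f) ∧
    ∀ m₁ m₂ : ℕ, ∫ x : E2, ((x 0) ^ m₁ * (x 1) ^ m₂ : ℝ) • f x = 0

/-- shearlet representation π_{b,s,a}ψ -/
def srep (ψ : E2 → ℂ) (b : E2) (s a : ℝ) (x : E2) : ℂ :=
  (|a| ^ (-(3:ℝ)/4) : ℝ) •
    ψ (e2 ((x 0 - b 0 + s * (x 1 - b 1)) / a) (Real.sqrt |a| * (x 1 - b 1) / a))

/-- shearlet transform 𝒮_ψ f (b,s,a) = ⟨f, π_{b,s,a}ψ⟩ -/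
def sTrans (ψ f : E2 → ℂ) (b : E2) (s a : ℝ) : ℂ :=
  ∫ x : E2, f x * (starRingEnd ℂ) (srep ψ b s a x)

/-- shearlet synthesis operator -/
def sSynth (ψ : E2 → ℂ) (Φ : ℝ → ℝ → ℝ → ℝ → ℂ) (x : E2) : ℂ :=
  ∫ p : ℝ × ℝ × ℝ × ℝ,
    (|p.2.2.2| ^ (-(3:ℝ)) : ℝ) •
      (Φ p.1 p.2.1 p.2.2.1 p.2.2.2 * srep ψ (e2 p.1 p.2.1) p.2.2.1 p.2.2.2 x)

/-- mixed partial derivative ∂_a^γ ∂_s^β ∂_{b₂}^{α₂} ∂_{b₁}^{α₁} Φ -/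
def mixedD (α₁ α₂ β γ : ℕ) (Φ : ℝ → ℝ → ℝ → ℝ → ℂ) (b₁ b₂ s a : ℝ) : ℂ :=
  iteratedDeriv γ (fun a' => iteratedDeriv β (fun s' =>
    iteratedDeriv α₂ (fun y => iteratedDeriv α₁ (fun x => Φ x y s' a') b₁) b₂) s) a

/-- the weight in the norms of 𝒮(𝕊), with real exponent m -/
def wS (k₁ k₂ l : ℕ) (m : ℝ) (b₁ b₂ s a : ℝ) : ℝ :=
  jp b₁ ^ k₁ * jp b₂ ^ k₂ * jp s ^ l * (|a| ^ m + |a| ^ (-m))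

/-- the norms p^{α₁,α₂,β,γ}_{k₁,k₂,l,m} on 𝒮(𝕊) -/
def pN (k₁ k₂ l : ℕ) (m : ℝ) (α₁ α₂ β γ : ℕ) (Φ : ℝ → ℝ → ℝ → ℝ → ℂ) : ℝ :=
  ⨆ q : ℝ × ℝ × ℝ × {a : ℝ // a ≠ 0},
    wS k₁ k₂ l m q.1 q.2.1 q.2.2.1 q.2.2.2 *
      ‖mixedD α₁ α₂ β γ Φ q.1 q.2.1 q.2.2.1 q.2.2.2‖

/-- membership in the test function space 𝒮(𝕊) -/
def MemSS (Φ : ℝ → ℝ → ℝ → ℝ → ℂ) : Prop :=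
  ContDiffOn ℝ (⊤ : ℕ∞) (fun p : ℝ × ℝ × ℝ × ℝ => Φ p.1 p.2.1 p.2.2.1 p.2.2.2)
      {p : ℝ × ℝ × ℝ × ℝ | p.2.2.2 ≠ 0} ∧
    ∀ k₁ k₂ l m α₁ α₂ β γ : ℕ, ∃ C : ℝ, ∀ b₁ b₂ s a : ℝ, a ≠ 0 →
      wS k₁ k₂ l (m : ℝ) b₁ b₂ s a * ‖mixedD α₁ α₂ β γ Φ b₁ b₂ s a‖ ≤ C


-- auxiliary lemmas

lemma e2_zero (u v : ℝ) : e2 u v 0 = u := rfl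
lemma e2_one (u v : ℝ) : e2 u v 1 = v := rfl

lemma srep_conj (ψ : E2 → ℂ) (b : E2) (s a : ℝ) (x : E2) :
    srep (fun y => (starRingEnd ℂ) (ψ y)) b s a x = (starRingEnd ℂ) (srep ψ b s a x) := by
  simp [srep, Complex.real_smul, map_mul, Complex.conj_ofReal]

lemma jp_sq (t : ℝ) : jp t ^ 2 = 1 + t ^ 2 := by
  rw [jp, Real.sq_sqrt]
  · simp [Real.norm_eq_abs, sq_abs]
  · positivity

lemma cont_e2 : Continuous (fun uv : ℝ × ℝ => e2 uv.1 uv.2) := by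
  unfold e2
  exact (PiLp.continuous_toLp ..).comp (continuous_pi (fun i => by fin_cases i <;> simp <;> fun_prop))

lemma rpow_le_sum {r : ℝ} (hr : 0 < r) {c c₁ c₂ : ℝ} (h1 : c₁ ≤ c) (h2 : c ≤ c₂) :
    r ^ c ≤ r ^ c₁ + r ^ c₂ := by
  rcases le_total 1 r with h | h
  · exact le_add_of_nonneg_left (Real.rpow_nonneg hr.le _) |>.trans'
      (Real.rpow_le_rpow_of_exponent_le h h2)
  · exact le_add_of_nonneg_right (Real.rpow_nonneg hr.le _) |>.trans'
      (Real.rpow_le_rpow_of_exponent_ge hr h h1)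

lemma aKey (a : ℝ) :
    |a| ^ (-(3:ℝ)) * |a| ^ (-(3:ℝ)/4) / (|a| ^ ((8:ℕ):ℝ) + |a| ^ (-((8:ℕ):ℝ))) ≤
      2 * (1 + a ^ 2)⁻¹ := by
  rcases eq_or_ne a 0 with rfl | ha
  · simp [Real.zero_rpow]
  · have hr : 0 < |a| := abs_pos.2 ha
    have hden : 0 < |a| ^ ((8:ℕ):ℝ) + |a| ^ (-((8:ℕ):ℝ)) := by positivity
    have hpos : 0 < 1 + a ^ 2 := by positivity
    rw [← Real.rpow_add hr, div_le_iff₀ hden,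
      show 2 * (1 + a ^ 2)⁻¹ * (|a| ^ ((8:ℕ):ℝ) + |a| ^ (-((8:ℕ):ℝ)))
        = 2 * (|a| ^ ((8:ℕ):ℝ) + |a| ^ (-((8:ℕ):ℝ))) / (1 + a ^ 2) by ring,
      le_div_iff₀ hpos]
    have e1 : |a| ^ (-(3:ℝ) + -(3:ℝ)/4) * (1 + a ^ 2)
        = |a| ^ (-(3:ℝ) + -(3:ℝ)/4) + |a| ^ (-(3:ℝ) + -(3:ℝ)/4 + 2) := by
      rw [mul_add, mul_one, ← _root_.sq_abs a, ← Real.rpow_natCast |a| 2, ← Real.rpow_add hr]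
      norm_num
    rw [e1]
    have b1 : |a| ^ (-(3:ℝ) + -(3:ℝ)/4) ≤ |a| ^ (-((8:ℕ):ℝ)) + |a| ^ ((8:ℕ):ℝ) :=
      rpow_le_sum hr (by norm_num) (by norm_num)
    have b2 : |a| ^ (-(3:ℝ) + -(3:ℝ)/4 + 2) ≤ |a| ^ (-((8:ℕ):ℝ)) + |a| ^ ((8:ℕ):ℝ) :=
      rpow_le_sum hr (by norm_num) (by norm_num)
    linarith

lemma mixedD_zero (Φ : ℝ → ℝ → ℝ → ℝ → ℂ) (b₁ b₂ s a : ℝ) :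
    mixedD 0 0 0 0 Φ b₁ b₂ s a = Φ b₁ b₂ s a := by
  simp [mixedD]


set_option maxHeartbeats 1000000 in
/-- duality between the shearlet transform and the synthesis operator. -/
theorem shearlet_duality
    (ψ : SchwartzMap E2 ℂ)
    (hψ : ∀ m₁ m₂ : ℕ, ∫ x : E2, ((x 0) ^ m₁ * (x 1) ^ m₂ : ℝ) • ψ x = 0)
    (f : E2 → ℂ) (hf1 : Integrable f) (hf2 : MemLp f 2 volume)
    (F : ℝ → ℝ → ℝ → ℝ → ℂ) (hF : MemSS F) :
    ∫ x : E2, f x * sSynth (fun y => (starRingEnd ℂ) (ψ y)) F x =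
      ∫ p : ℝ × ℝ × ℝ × ℝ,
        (|p.2.2.2| ^ (-(3:ℝ)) : ℝ) •
          (sTrans (⇑ψ) f (e2 p.1 p.2.1) p.2.2.1 p.2.2.2 *
            F p.1 p.2.1 p.2.2.1 p.2.2.2) := by
  -- constants
  obtain ⟨C₀, hC₀pos, hC₀⟩ := ψ.decay 0 0
  have hC₀' : ∀ y : E2, ‖ψ y‖ ≤ C₀ := by
    intro y; have := hC₀ y; simpa using this
  obtain ⟨C₁, hC₁⟩ := hF.2 2 2 2 8 0 0 0 0
  simp only [mixedD_zero] at hC₁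
  -- positivity of the weight
  have jp_pos : ∀ t : ℝ, 0 < jp t := fun t => Real.sqrt_pos.2 (by positivity)
  have wS_pos : ∀ b₁ b₂ s a : ℝ, a ≠ 0 → 0 < wS 2 2 2 ((8:ℕ):ℝ) b₁ b₂ s a := by
    intro b₁ b₂ s a ha
    have hr : 0 < |a| := abs_pos.2 ha
    unfold wS
    have h1 := jp_pos b₁; have h2 := jp_pos b₂; have h3 := jp_pos s
    have h4 : 0 < |a| ^ ((8:ℕ):ℝ) := Real.rpow_pos_of_pos hr _
    have h5 : 0 < |a| ^ (-((8:ℕ):ℝ)) := Real.rpow_pos_of_pos hr _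
    positivity
  have hC₁nn : 0 ≤ C₁ := le_trans (mul_nonneg (wS_pos 0 0 0 1 one_ne_zero).le (norm_nonneg _)) (hC₁ 0 0 0 1 one_ne_zero)
  -- bound on F
  have hFb : ∀ b₁ b₂ s a : ℝ, a ≠ 0 → ‖F b₁ b₂ s a‖ ≤
      C₁ * ((1+b₁^2)⁻¹ * ((1+b₂^2)⁻¹ * ((1+s^2)⁻¹ *
        (|a| ^ ((8:ℕ):ℝ) + |a| ^ (-((8:ℕ):ℝ)))⁻¹))) := by
    intro b₁ b₂ s a ha
    have hw := wS_pos b₁ b₂ s a ha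
    have h := hC₁ b₁ b₂ s a ha
    rw [← le_div_iff₀' hw] at h
    refine h.trans (le_of_eq ?_)
    have hw' : wS 2 2 2 ((8:ℕ):ℝ) b₁ b₂ s a =
        (1+b₁^2) * ((1+b₂^2) * ((1+s^2) * (|a| ^ ((8:ℕ):ℝ) + |a| ^ (-((8:ℕ):ℝ))))) := by
      unfold wS; rw [jp_sq, jp_sq, jp_sq]; ring
    rw [div_eq_mul_inv, hw', mul_inv, mul_inv, mul_inv]
  -- the kernel of the double integral
  set G : E2 × (ℝ × ℝ × ℝ × ℝ) → ℂ := fun z =>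
    (|z.2.2.2.2| ^ (-(3:ℝ)) : ℝ) •
      (F z.2.1 z.2.2.1 z.2.2.2.1 z.2.2.2.2 *
        (starRingEnd ℂ) (srep (⇑ψ) (e2 z.2.1 z.2.2.1) z.2.2.2.1 z.2.2.2.2 z.1)) with hGdef
  -- the open set where everything is continuous
  set U : Set (E2 × (ℝ × ℝ × ℝ × ℝ)) := {z | z.2.2.2.2 ≠ 0} with hUdef
  have hUopen : IsOpen U := isOpen_ne.preimage (by fun_prop)
  have hUc_null : volume Uᶜ = 0 := by
    have hset : Uᶜ = (Set.univ : Set E2) ×ˢ ((Set.univ : Set ℝ) ×ˢ ((Set.univ : Set ℝ) ×ˢ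
        ((Set.univ : Set ℝ) ×ˢ ({0} : Set ℝ)))) := by
      ext z
      simp only [hUdef, Set.mem_compl_iff, Set.mem_setOf_eq, not_not, Set.mem_prod,
        Set.mem_univ, Set.mem_singleton_iff, true_and]
    rw [hset, Measure.volume_eq_prod, Measure.prod_prod, Measure.volume_eq_prod, Measure.prod_prod,
      Measure.volume_eq_prod, Measure.prod_prod, Measure.volume_eq_prod, Measure.prod_prod]
    simp
  have hres : (volume : Measure (E2 × (ℝ × ℝ × ℝ × ℝ))).restrict U = volume := by
    apply Measure.restrict_eq_self_of_ae_mem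
    rw [MeasureTheory.ae_iff]
    simpa [Set.compl_def] using hUc_null
  -- continuity of G on U
  have cA : ContinuousOn (fun z : E2 × (ℝ × ℝ × ℝ × ℝ) => z.2.2.2.2) U := by fun_prop
  have cx0 : Continuous (fun z : E2 × (ℝ × ℝ × ℝ × ℝ) => z.1 0) :=
    (continuous_apply (0 : Fin 2)).comp ((PiLp.continuous_ofLp ..).comp continuous_fst)
  have cx1 : Continuous (fun z : E2 × (ℝ × ℝ × ℝ × ℝ) => z.1 1) :=
    (continuous_apply (1 : Fin 2)).comp ((PiLp.continuous_ofLp ..).comp continuous_fst)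
  have cUq : ContinuousOn (fun z : E2 × (ℝ × ℝ × ℝ × ℝ) =>
      (z.1 0 - z.2.1 + z.2.2.2.1 * (z.1 1 - z.2.2.1)) / z.2.2.2.2) U := by
    apply ContinuousOn.div _ cA (fun z hz => hz)
    exact ((cx0.sub (by fun_prop)).add ((by fun_prop : Continuous
      (fun z : E2 × (ℝ × ℝ × ℝ × ℝ) => z.2.2.2.1)).mul (cx1.sub (by fun_prop)))).continuousOn
  have cVq : ContinuousOn (fun z : E2 × (ℝ × ℝ × ℝ × ℝ) =>
      Real.sqrt |z.2.2.2.2| * (z.1 1 - z.2.2.1) / z.2.2.2.2) U := by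
    apply ContinuousOn.div _ cA (fun z hz => hz)
    exact ((Real.continuous_sqrt.comp (_root_.continuous_abs.comp (by fun_prop))).mul
      (cx1.sub (by fun_prop))).continuousOn
  have cSrep : ContinuousOn (fun z : E2 × (ℝ × ℝ × ℝ × ℝ) =>
      srep (⇑ψ) (e2 z.2.1 z.2.2.1) z.2.2.2.1 z.2.2.2.2 z.1) U := by
    simp only [srep, e2_zero, e2_one]
    exact ContinuousOn.smul
      (ContinuousOn.rpow_const (_root_.continuous_abs.comp_continuousOn cA)
        (fun z hz => Or.inl (abs_ne_zero.2 hz)))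
      ((ψ.continuous.comp cont_e2).comp_continuousOn (cUq.prodMk cVq))
  have cF : ContinuousOn (fun z : E2 × (ℝ × ℝ × ℝ × ℝ) =>
      F z.2.1 z.2.2.1 z.2.2.2.1 z.2.2.2.2) U :=
    (hF.1.continuousOn).comp continuous_snd.continuousOn (fun z hz => hz)
  have cG : ContinuousOn G U := by
    rw [hGdef]
    exact ContinuousOn.smul
      (ContinuousOn.rpow_const (_root_.continuous_abs.comp_continuousOn cA)
        (fun z hz => Or.inl (abs_ne_zero.2 hz)))
      (cF.mul (continuous_star.comp_continuousOn cSrep))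
  have hG : AEStronglyMeasurable G volume := by
    rw [← hres]; exact cG.aestronglyMeasurable hUopen.measurableSet
  have hK : AEStronglyMeasurable (fun z : E2 × (ℝ × ℝ × ℝ × ℝ) => f z.1 * G z) volume := by
    rw [Measure.volume_eq_prod]
    refine AEStronglyMeasurable.mul ?_ (by rw [← Measure.volume_eq_prod]; exact hG)
    exact hf1.aestronglyMeasurable.comp_fst
  -- the dominating function
  set D : E2 × (ℝ × ℝ × ℝ × ℝ) → ℝ := fun z =>
    ‖f z.1‖ * ((C₀ * C₁) * ((1 + z.2.1 ^ 2)⁻¹ * ((1 + z.2.2.1 ^ 2)⁻¹ *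
      ((1 + z.2.2.2.1 ^ 2)⁻¹ * (2 * (1 + z.2.2.2.2 ^ 2)⁻¹))))) with hDdef
  have hg3 : Integrable (fun q : ℝ × ℝ => (1+q.1^2)⁻¹ * (2*(1+q.2^2)⁻¹)) volume :=
    integrable_inv_one_add_sq.mul_prod (integrable_inv_one_add_sq.const_mul 2)
  have hg2 : Integrable (fun q : ℝ × ℝ × ℝ =>
      (1+q.1^2)⁻¹ * ((1+q.2.1^2)⁻¹ * (2*(1+q.2.2^2)⁻¹))) volume :=
    integrable_inv_one_add_sq.mul_prod hg3
  have hg1 : Integrable (fun p : ℝ × ℝ × ℝ × ℝ =>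
      (1+p.1^2)⁻¹ * ((1+p.2.1^2)⁻¹ * ((1+p.2.2.1^2)⁻¹ * (2*(1+p.2.2.2^2)⁻¹)))) volume :=
    integrable_inv_one_add_sq.mul_prod hg2
  have hD : Integrable D volume := by
    rw [hDdef]
    exact hf1.norm.mul_prod (hg1.const_mul (C₀*C₁))
  -- pointwise bound
  have hbound : ∀ z : E2 × (ℝ × ℝ × ℝ × ℝ), ‖f z.1 * G z‖ ≤ D z := by
    rintro ⟨x, b₁, b₂, s, a⟩
    have hDnn : (0:ℝ) ≤ D (x, b₁, b₂, s, a) := by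
      rw [hDdef]
      exact mul_nonneg (norm_nonneg _) (mul_nonneg (mul_nonneg hC₀pos.le hC₁nn) (by positivity))
    rcases eq_or_ne a 0 with rfl | ha
    · simpa [hGdef, Real.zero_rpow] using hDnn
    · have hra : (0:ℝ) ≤ |a| := abs_nonneg a
      have h34 : (0:ℝ) ≤ |a| ^ (-(3:ℝ)/4) := Real.rpow_nonneg hra _
      have h3 : (0:ℝ) ≤ |a| ^ (-(3:ℝ)) := Real.rpow_nonneg hra _
      have t1 : ‖srep (⇑ψ) (e2 b₁ b₂) s a x‖ ≤ |a| ^ (-(3:ℝ)/4) * C₀ := by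
        rw [srep, norm_smul, Real.norm_eq_abs, _root_.abs_of_nonneg h34]
        exact mul_le_mul_of_nonneg_left (hC₀' _) h34
      have t2 := hFb b₁ b₂ s a ha
      set B : ℝ := C₁ * ((1+b₁^2)⁻¹ * ((1+b₂^2)⁻¹ * ((1+s^2)⁻¹ *
        (|a| ^ ((8:ℕ):ℝ) + |a| ^ (-((8:ℕ):ℝ)))⁻¹))) with hBdef
      have hBnn : (0:ℝ) ≤ B := le_trans (norm_nonneg _) t2
      have hGn : ‖G (x, b₁, b₂, s, a)‖ =
          |a| ^ (-(3:ℝ)) * (‖F b₁ b₂ s a‖ * ‖srep (⇑ψ) (e2 b₁ b₂) s a x‖) := by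
        rw [hGdef]
        show ‖(|a| ^ (-(3:ℝ)) : ℝ) • (F b₁ b₂ s a *
          (starRingEnd ℂ) (srep (⇑ψ) (e2 b₁ b₂) s a x))‖ = _
        rw [norm_smul, norm_mul, RCLike.norm_conj, Real.norm_eq_abs, _root_.abs_of_nonneg h3]
      have step1 : ‖f x * G (x, b₁, b₂, s, a)‖ ≤
          ‖f x‖ * (|a| ^ (-(3:ℝ)) * (B * (|a| ^ (-(3:ℝ)/4) * C₀))) := by
        rw [norm_mul, hGn]
        refine mul_le_mul_of_nonneg_left (mul_le_mul_of_nonneg_left ?_ h3) (norm_nonneg _)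
        exact mul_le_mul t2 t1 (norm_nonneg _) hBnn
      refine step1.trans ?_
      rw [hDdef]
      refine mul_le_mul_of_nonneg_left ?_ (norm_nonneg _)
      have hrw : |a| ^ (-(3:ℝ)) * (B * (|a| ^ (-(3:ℝ)/4) * C₀)) =
          (C₀ * C₁) * ((1+b₁^2)⁻¹ * ((1+b₂^2)⁻¹ * ((1+s^2)⁻¹ *
            (|a| ^ (-(3:ℝ)) * |a| ^ (-(3:ℝ)/4) / (|a| ^ ((8:ℕ):ℝ) + |a| ^ (-((8:ℕ):ℝ))))))) := by
        rw [hBdef, div_eq_mul_inv]; ring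
      rw [hrw]
      refine mul_le_mul_of_nonneg_left ?_ (mul_nonneg hC₀pos.le hC₁nn)
      refine mul_le_mul_of_nonneg_left ?_ (by positivity)
      refine mul_le_mul_of_nonneg_left ?_ (by positivity)
      exact mul_le_mul_of_nonneg_left (aKey a) (by positivity)
  -- joint integrability
  have hKint : Integrable (Function.uncurry (fun (x : E2) (p : ℝ × ℝ × ℝ × ℝ) =>
      f x * G (x, p))) (volume.prod volume) := by
    rw [← Measure.volume_eq_prod]
    exact Integrable.mono' hD hK (Filter.Eventually.of_forall hbound)
  -- Fubini
  have swap := MeasureTheory.integral_integral_swap hKint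
  calc ∫ x : E2, f x * sSynth (fun y => (starRingEnd ℂ) (ψ y)) F x
      = ∫ x : E2, ∫ p : ℝ × ℝ × ℝ × ℝ, f x * G (x, p) := by
        refine integral_congr_ae (Filter.Eventually.of_forall fun x => ?_)
        dsimp only
        have : sSynth (fun y => (starRingEnd ℂ) (ψ y)) F x = ∫ p : ℝ × ℝ × ℝ × ℝ, G (x, p) := by
          unfold sSynth
          refine integral_congr_ae (Filter.Eventually.of_forall fun p => ?_)
          simp only [hGdef, srep_conj]
        rw [this, ← integral_const_mul]
    _ = ∫ p : ℝ × ℝ × ℝ × ℝ, ∫ x : E2, f x * G (x, p) := swap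
    _ = ∫ p : ℝ × ℝ × ℝ × ℝ,
        (|p.2.2.2| ^ (-(3:ℝ)) : ℝ) •
          (sTrans (⇑ψ) f (e2 p.1 p.2.1) p.2.2.1 p.2.2.2 *
            F p.1 p.2.1 p.2.2.1 p.2.2.2) := by
        refine integral_congr_ae (Filter.Eventually.of_forall fun p => ?_)
        dsimp only
        have e : ∀ x : E2, f x * G (x, p) =
            (|p.2.2.2| ^ (-(3:ℝ)) : ℝ) • (F p.1 p.2.1 p.2.2.1 p.2.2.2 *
              (f x * (starRingEnd ℂ) (srep (⇑ψ) (e2 p.1 p.2.1) p.2.2.1 p.2.2.2 x))) := by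
          intro x
          rw [hGdef]
          simp only [Complex.real_smul]
          ring
        simp only [e]
        rw [integral_smul, integral_const_mul]
        rw [show sTrans (⇑ψ) f (e2 p.1 p.2.1) p.2.2.1 p.2.2.2 =
          ∫ x : E2, f x * (starRingEnd ℂ) (srep (⇑ψ) (e2 p.1 p.2.1) p.2.2.1 p.2.2.2 x) from rfl]
        rw [mul_comm]

end
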